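/- arXiv:2406.00394 — 2 statements merged into one kernel-verified Lean document; each statement's English description precedes it below -/
import Mathlib

section
/- Let W be a strictly upper triangular n×n matrix with nonnegative entries, and let F = (I − W)^{−1}. Then for i ≠ j, the entry F i j is strictly positive if and only if there exists a directed path from i to j in the graph whose edges are the pairs (k,l) with W k l > 0; moreover F i i = 1 for all i. -/
/-!
Strict upper triangularity makes `W` nilpotent, so `(1 - W)⁻¹ = ∑_{k<n} W ^ k`. For a nonnegative
matrix, `(W ^ k) i j > 0` exactly when the graph of `W` has a walk of length `k` from `i` to `j`,
and every walk in this graph has length `< n` since it strictly increases the index.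
-/

open Finset

namespace Quiver

variable {V : Type*} [Quiver V]

theorem transGen_iff_exists_path_length_pos {a b : V} :
    Relation.TransGen (fun x y : V => Nonempty (x ⟶ y)) a b ↔ ∃ p : Path a b, 0 < p.length := by
  constructor
  · intro h
    induction h with
    | single e => exact ⟨e.some.toPath, Nat.one_pos⟩
    | tail _ e ih =>
      obtain ⟨p, -⟩ := ih
      exact ⟨p.cons e.some, Nat.succ_pos _⟩
  · rintro ⟨p, hp⟩
    induction p with
    | nil => exact absurd hp (lt_irrefl 0)
    | cons p e ih =>
      rcases Nat.eq_zero_or_pos p.length with h | h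
      · obtain rfl := p.eq_of_length_zero h
        exact .single ⟨e⟩
      · exact .tail (ih h) ⟨e⟩

end Quiver

namespace Matrix

section Path

variable {ι R : Type*} [Fintype ι] [DecidableEq ι] [Ring R] [LinearOrder R] [IsOrderedRing R]
  [Nontrivial R] [PosMulStrictMono R] {A : Matrix ι ι R}

theorem transGen_pos_iff_exists_pow_apply_pos (hA : ∀ i j, 0 ≤ A i j) {i j : ι} :
    Relation.TransGen (fun k l => 0 < A k l) i j ↔ ∃ k, 0 < k ∧ 0 < (A ^ k) i j := by
  let := toQuiver A
  have hedge : (fun k l => 0 < A k l) = fun k l : ι => Nonempty (k ⟶ l) := by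
    ext k l; exact ⟨fun h => ⟨⟨h⟩⟩, fun ⟨e⟩ => e.down⟩
  simp only [hedge, Quiver.transGen_iff_exists_path_length_pos, pow_apply_pos_iff_nonempty_path hA]
  exact ⟨fun ⟨p, hp⟩ => ⟨p.length, hp, ⟨p, rfl⟩⟩, fun ⟨_, hk, ⟨p, hp⟩⟩ => ⟨p, hp ▸ hk⟩⟩

end Path

theorem inv_one_sub_eq_sum_pow {ι R : Type*} [Fintype ι] [DecidableEq ι] [CommRing R]
    {A : Matrix ι ι R} {N : ℕ} (hN : A ^ N = 0) : (1 - A)⁻¹ = ∑ k ∈ range N, A ^ k :=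
  inv_eq_right_inv (by rw [mul_neg_geom_sum, hN, sub_zero])

section StrictUpper

variable {n : ℕ} {R : Type*} [Semiring R] {W : Matrix (Fin n) (Fin n) R}

theorem pow_apply_eq_zero_of_lt (hW : ∀ i j, j ≤ i → W i j = 0) {k : ℕ} {i j : Fin n}
    (h : (j : ℕ) < i + k) : (W ^ k) i j = 0 := by
  induction k generalizing i with
  | zero => exact one_apply_ne (Fin.ne_of_gt h)
  | succ k ih =>
    rw [pow_succ', mul_apply]
    refine sum_eq_zero fun l _ => ?_
    rcases le_or_gt l i with hl | hl
    · rw [hW i l hl, zero_mul]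
    · rw [ih (by omega), mul_zero]

theorem pow_eq_zero_of_strictUpper (hW : ∀ i j, j ≤ i → W i j = 0) : W ^ n = 0 := by
  ext i j
  exact pow_apply_eq_zero_of_lt hW (by omega)

end StrictUpper

end Matrix

open Matrix in
/-- For a nonnegative strictly upper triangular `W` with reduced form `F = (I - W)⁻¹`,
off-diagonal entries of `F` are positive exactly when there is a directed path in the
graph of positive entries of `W`; diagonal entries equal `1`. -/
theorem reducedForm_pos_iff_path {n : ℕ} (W : Matrix (Fin n) (Fin n) ℝ)
    (hW0 : ∀ i j : Fin n, 0 ≤ W i j) (hW : ∀ i j : Fin n, j ≤ i → W i j = 0) :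
    (∀ i j : Fin n, i ≠ j →
      (0 < (1 - W)⁻¹ i j ↔ Relation.TransGen (fun k l => 0 < W k l) i j)) ∧
    (∀ i : Fin n, (1 - W)⁻¹ i i = 1) := by
  have hF : ∀ i j, (1 - W)⁻¹ i j = ∑ k ∈ range n, (W ^ k) i j := fun i j => by
    rw [inv_one_sub_eq_sum_pow (pow_eq_zero_of_strictUpper hW), Matrix.sum_apply]
  refine ⟨fun i j hij => ?_, fun i => ?_⟩
  · rw [hF, sum_pos_iff_of_nonneg (fun k _ => pow_apply_nonneg hW0 k i j),
      transGen_pos_iff_exists_pow_apply_pos hW0]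
    constructor
    · rintro ⟨k, -, hk⟩
      refine ⟨k, Nat.pos_of_ne_zero ?_, hk⟩
      rintro rfl
      simp [one_apply_ne hij] at hk
    · rintro ⟨k, -, hk⟩
      refine ⟨k, mem_range.2 ?_, hk⟩
      by_contra hkn
      exact hk.ne' (pow_apply_eq_zero_of_lt hW (by omega))
  · rw [hF, sum_eq_single_of_mem 0 (mem_range.2 i.pos) fun k _ hk =>
      pow_apply_eq_zero_of_lt hW (by omega)]
    simp
end

section
/- Let A ∈ ℝ^{p×p} and C ∈ ℝ^{q×q} be strictly upper triangular, W₁₂ ∈ ℝ^{p×q}, t₁ ∈ ℝ^p, t₂ ∈ ℝ^q, m ∈ ℝ. Define s₁ = (I−A)^{−1} t₁, s₂ = (I−C)^{−1} t₂, the concrete matrix W = [[A, W₁₂],[0, C]], the block-diagonal map T = [[t₁, 0],[0, t₂]] ∈ ℝ^{(p+q)×2}, the exogenous map S = [[s₁, 0],[0, s₂]], and the abstract reduced form G = [[1, m],[0, 1]]. Then (I − W)^{−1} T = S G if and only if W₁₂ s₂ = m t₁. -/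
/-!
Since `A` and `C` are strictly upper triangular, `1 - A`, `1 - C` and the block upper
triangular `1 - W` have determinant `1`, so `(1 - W)⁻¹ T = S G` is equivalent to
`T = (1 - W) S G`. Multiplying out the blocks, with `(1 - A) s₁ = t₁` and `(1 - C) s₂ = t₂`,
the diagonal blocks of both sides always agree, and the upper right one reads
`0 = m t₁ - W₁₂ s₂`.
-/

open Matrix

namespace Matrix

variable {R : Type*} {k l m n : Type*}

theorem det_one_sub_eq_one_of_strictUpper [CommRing R] [Fintype n] [DecidableEq n]
    [LinearOrder n] {A : Matrix n n R} (hA : ∀ i j, j ≤ i → A i j = 0) : (1 - A).det = 1 := by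
  have hupper : (1 - A).IsUpperTriangular := fun i j hji => by
    have hij : i ≠ j := hji.ne'
    simp [sub_apply, hA i j hji.le, hij]
  rw [det_of_isUpperTriangular hupper]
  exact Finset.prod_eq_one fun i _ => by simp [hA i i le_rfl]

theorem one_sub_fromBlocks_zero₂₁ [Ring R] [DecidableEq m] [DecidableEq n]
    (A : Matrix m m R) (B : Matrix m n R) (D : Matrix n n R) :
    1 - fromBlocks A B 0 D = fromBlocks (1 - A) (-B) 0 (1 - D) := by
  rw [sub_eq_add_neg, ← fromBlocks_one, fromBlocks_neg, fromBlocks_add]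
  simp only [neg_zero, add_zero, ← sub_eq_add_neg, zero_sub]

theorem fromBlocks_zero₂₁_mul_fromBlocks_diag_mul_eq_iff [Ring R] [Fintype m] [Fintype n]
    [Fintype k] [Fintype l] [DecidableEq k] [DecidableEq l]
    {P : Matrix m m R} {B : Matrix m n R} {Q : Matrix n n R} {S₁ T₁ : Matrix m k R}
    {S₂ T₂ : Matrix n l R} (M : Matrix k l R) (hT₁ : P * S₁ = T₁) (hT₂ : Q * S₂ = T₂) :
    fromBlocks P (-B) 0 Q *
          (fromBlocks S₁ 0 0 S₂ * fromBlocks (1 : Matrix k k R) M 0 (1 : Matrix l l R)) =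
        fromBlocks T₁ 0 0 T₂ ↔ B * S₂ = T₁ * M := by
  simp only [fromBlocks_multiply, Matrix.mul_zero, Matrix.zero_mul, Matrix.mul_one,
    add_zero, zero_add, fromBlocks_inj, hT₁, hT₂, ← Matrix.mul_assoc, Matrix.neg_mul, true_and,
    and_true]
  rw [← sub_eq_add_neg, sub_eq_zero, eq_comm]

theorem mul_replicateCol_eq_replicateCol_mul_iff [CommSemiring R] [Fintype n] [Unique k]
    (B : Matrix m n R) (s : n → R) (t : m → R) (c : R) :
    B * replicateCol k s = replicateCol k t * of (fun _ _ : k => c) ↔ B *ᵥ s = c • t := by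
  have hrhs : replicateCol k t * of (fun _ _ : k => c) = replicateCol k (c • t) := by
    ext i j
    simp [Matrix.mul_apply, mul_comm]
  rw [← replicateCol_mulVec, hrhs, replicateCol_inj]

end Matrix

/-- Two-variable Block Abstraction theorem: the abstract model `Y₁ → Y₂` with
coefficient `m` is a `T`-abstraction of the two-block concrete model exactly when
`W₁₂ s₂ = m t₁`. -/
theorem block_abstraction_two_vars {p q : ℕ}
    (A : Matrix (Fin p) (Fin p) ℝ) (C : Matrix (Fin q) (Fin q) ℝ)
    (hA : ∀ i j : Fin p, j ≤ i → A i j = 0) (hC : ∀ i j : Fin q, j ≤ i → C i j = 0)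
    (W₁₂ : Matrix (Fin p) (Fin q) ℝ) (t₁ : Fin p → ℝ) (t₂ : Fin q → ℝ) (m : ℝ)
    (s₁ : Fin p → ℝ) (hs₁ : s₁ = (1 - A)⁻¹.mulVec t₁)
    (s₂ : Fin q → ℝ) (hs₂ : s₂ = (1 - C)⁻¹.mulVec t₂) :
    ((1 - Matrix.fromBlocks A W₁₂ 0 C)⁻¹ *
        Matrix.fromBlocks (Matrix.of fun i (_ : Fin 1) => t₁ i) 0 0
          (Matrix.of fun i (_ : Fin 1) => t₂ i) =
      Matrix.fromBlocks (Matrix.of fun i (_ : Fin 1) => s₁ i) 0 0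
          (Matrix.of fun i (_ : Fin 1) => s₂ i) *
        Matrix.fromBlocks 1 (Matrix.of fun (_ : Fin 1) (_ : Fin 1) => m) 0 1)
      ↔ W₁₂.mulVec s₂ = m • t₁ := by
  have hdetA := det_one_sub_eq_one_of_strictUpper hA
  have hdetC := det_one_sub_eq_one_of_strictUpper hC
  have hunitA : IsUnit (1 - A).det := hdetA ▸ isUnit_one
  have hunitC : IsUnit (1 - C).det := hdetC ▸ isUnit_one
  have hunitW : IsUnit (1 - fromBlocks A W₁₂ 0 C).det := by
    rw [one_sub_fromBlocks_zero₂₁, det_fromBlocks_zero₂₁, hdetA, hdetC, mul_one]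
    exact isUnit_one
  have ht₁ : (1 - A) * replicateCol (Fin 1) s₁ = replicateCol (Fin 1) t₁ := by
    rw [← replicateCol_mulVec, hs₁, mulVec_mulVec, mul_nonsing_inv _ hunitA, one_mulVec]
  have ht₂ : (1 - C) * replicateCol (Fin 1) s₂ = replicateCol (Fin 1) t₂ := by
    rw [← replicateCol_mulVec, hs₂, mulVec_mulVec, mul_nonsing_inv _ hunitC, one_mulVec]
  have := invertibleOfIsUnitDet _ hunitW
  rw [inv_mul_eq_iff_eq_mul_of_invertible, eq_comm, one_sub_fromBlocks_zero₂₁]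
  exact (fromBlocks_zero₂₁_mul_fromBlocks_diag_mul_eq_iff _ ht₁ ht₂).trans
    (mul_replicateCol_eq_replicateCol_mul_iff W₁₂ s₂ t₁ m)
end
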